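/- arXiv:2112.09834 — 3 statements merged into one kernel-verified Lean document; each statement's English description precedes it below -/
import Mathlib

section
/- (Theorem 1) Let m ≥ 1 and n ≥ 1. The total reuse distance of the sequential trace of length n·m given by a(i) = i mod m (an ensemble of m learners processing a data stream of n instances without mini-batching) equals exactly n·m² (and is hence O(n·m²)). -/
/-- The set of previous accesses to the same address as position `i`. -/
def prevAccesses {N m : ℕ} (a : Fin N → Fin m) (i : Fin N) : Finset (Fin N) :=
  Finset.univ.filter (fun j => j < i ∧ a j = a i)

/-- The reuse distance of the access at position `i` in the trace `a`:
the number of distinct addresses occurring in the segment from just after the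
previous access to the same address up to and including `i`; defined to be `m`
for a first access. -/
def RD {N m : ℕ} (a : Fin N → Fin m) (i : Fin N) : ℕ :=
  if h : (prevAccesses a i).Nonempty then
    ((Finset.univ.filter
        (fun k : Fin N => (prevAccesses a i).max' h < k ∧ k ≤ i)).image a).card
  else m

/-- The total reuse distance of a trace. -/
def totalRD {N m : ℕ} (a : Fin N → Fin m) : ℕ := ∑ i, RD a i

/-- The sequential trace: an ensemble of `m` learners each trained once on each
of `n` arriving stream instances, i.e. the block `(e₁, …, e_m)` repeated `n`
times. -/
def seqTrace (n m : ℕ) (hm : 0 < m) : Fin (n * m) → Fin m :=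
  fun i => ⟨i.val % m, Nat.mod_lt _ hm⟩

lemma RD_seqTrace_eq {n m : ℕ} (hm : 1 ≤ m) (i : Fin (n * m)) :
    RD (seqTrace n m hm) i = m := by
  by_cases hi : i.val < m
  · -- first access: prevAccesses is empty
    have hemp : ¬ (prevAccesses (seqTrace n m hm) i).Nonempty := by
      rintro ⟨j, hj⟩
      simp only [prevAccesses, Finset.mem_filter, Finset.mem_univ, true_and,
        seqTrace, Fin.ext_iff, Fin.lt_def] at hj
      obtain ⟨hji, hmod⟩ := hj
      rw [Nat.mod_eq_of_lt (lt_trans hji hi), Nat.mod_eq_of_lt hi] at hmod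
      omega
    rw [RD, dif_neg hemp]
  · push_neg at hi
    have hiN : i.val < n * m := i.isLt
    set j0 : Fin (n * m) := ⟨i.val - m, by omega⟩ with hj0
    have hj0mem : j0 ∈ prevAccesses (seqTrace n m hm) i := by
      simp only [prevAccesses, Finset.mem_filter, Finset.mem_univ, true_and,
        seqTrace, Fin.ext_iff, Fin.lt_def]
      refine ⟨by simp [hj0]; omega, ?_⟩
      show (i.val - m) % m = i.val % m
      conv_rhs => rw [show i.val = (i.val - m) + m by omega]
      rw [Nat.add_mod_right]
    have hne : (prevAccesses (seqTrace n m hm) i).Nonempty := ⟨j0, hj0mem⟩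
    have hmax : (prevAccesses (seqTrace n m hm) i).max' hne = j0 := by
      apply le_antisymm
      · apply Finset.max'_le
        intro j hj
        simp only [prevAccesses, Finset.mem_filter, Finset.mem_univ, true_and,
          seqTrace, Fin.ext_iff, Fin.lt_def] at hj
        obtain ⟨hji, hmod⟩ := hj
        have hdvd : m ∣ i.val - j.val :=
          (Nat.modEq_iff_dvd' (le_of_lt hji)).mp hmod
        have hle : m ≤ i.val - j.val := Nat.le_of_dvd (by omega) hdvd
        rw [Fin.le_def]
        simp only [hj0]
        omega
      · exact Finset.le_max' _ _ hj0mem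
    rw [RD, dif_pos hne, hmax]
    set S := Finset.univ.filter
        (fun k : Fin (n * m) => j0 < k ∧ k ≤ i) with hS
    have hmemS : ∀ k : Fin (n * m), k ∈ S ↔ i.val - m < k.val ∧ k.val ≤ i.val := by
      intro k
      rw [hS]
      simp only [Finset.mem_filter, Finset.mem_univ, true_and, Fin.lt_def, Fin.le_def, hj0]
    have hinj : Set.InjOn (seqTrace n m hm) S := by
      intro k1 hk1 k2 hk2 heq
      rw [Finset.mem_coe, hmemS] at hk1 hk2
      simp only [seqTrace, Fin.ext_iff] at heq ⊢
      rcases le_total k1.val k2.val with h | h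
      · have hdvd : m ∣ k2.val - k1.val := (Nat.modEq_iff_dvd' h).mp heq
        rcases Nat.eq_zero_or_pos (k2.val - k1.val) with h0 | h0
        · omega
        · have := Nat.le_of_dvd h0 hdvd; omega
      · have hdvd : m ∣ k1.val - k2.val := (Nat.modEq_iff_dvd' h).mp heq.symm
        rcases Nat.eq_zero_or_pos (k1.val - k2.val) with h0 | h0
        · omega
        · have := Nat.le_of_dvd h0 hdvd; omega
    rw [Finset.card_image_of_injOn hinj]
    have : S.card = (S.image Fin.val).card :=
      (Finset.card_image_of_injOn (Fin.val_injective.injOn)).symm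
    rw [this]
    have himg : S.image Fin.val = Finset.Ioc (i.val - m) i.val := by
      ext x
      simp only [Finset.mem_image, Finset.mem_Ioc]
      constructor
      · rintro ⟨k, hk, rfl⟩
        exact (hmemS k).mp hk
      · rintro ⟨h1, h2⟩
        exact ⟨⟨x, by omega⟩, (hmemS _).mpr ⟨h1, h2⟩, rfl⟩
    rw [himg, Nat.card_Ioc]
    omega

/-- Theorem 1: the total reuse distance of the sequential trace of an ensemble
of `m` learners processing a stream of `n` instances is exactly `n·m²`. -/
theorem totalRD_seqTrace {n m : ℕ} (hn : 1 ≤ n) (hm : 1 ≤ m) :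
    totalRD (seqTrace n m hm) = n * m ^ 2 := by
  unfold totalRD
  simp only [RD_seqTrace_eq hm]
  simp [Finset.sum_const, Fintype.card_fin]
  ring
end

section
/- Let m ≥ 1, b ≥ 1, and r ≥ 1, and consider the mini-batched trace of length N = r·m·b given by a(i) = (i / b) mod m (integer division), i.e., the pattern (e₁^b, e₂^b, ..., e_m^b) repeated r times. Then an access at a position i with i mod b = 0 (the first access of a block of b consecutive accesses to the same address) has reuse distance exactly m, and an access at a position with i mod b ≠ 0 has reuse distance exactly 1; i.e., the reuse-distance sequence is ((m, 1^{b−1})^m)^r. -/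
/-- The mini-batched trace with mini-batch size `b`: the pattern
`(e₁^b, e₂^b, …, e_m^b)` repeated `r` times. -/
def batchTrace (r m b : ℕ) (hm : 0 < m) : Fin (r * m * b) → Fin m :=
  fun i => ⟨(i.val / b) % m, Nat.mod_lt _ hm⟩

/-- In the mini-batched trace, the first access of each block of `b`
consecutive accesses to the same address has reuse distance exactly `m`, and
every other access has reuse distance exactly `1`;
i.e., the reuse-distance sequence is `((m, 1^{b−1})^m)^r`. -/
theorem RD_batchTrace {r m b : ℕ} (hr : 1 ≤ r) (hm : 1 ≤ m) (hb : 1 ≤ b)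
    (i : Fin (r * m * b)) :
    (i.val % b = 0 → RD (batchTrace r m b hm) i = m) ∧
    (i.val % b ≠ 0 → RD (batchTrace r m b hm) i = 1) := by
  have hb0 : 0 < b := hb
  set a := batchTrace r m b hm with ha
  have haij : ∀ j k : Fin (r * m * b), a j = a k ↔ (j.val / b) % m = (k.val / b) % m := by
    intro j k
    simp [ha, batchTrace, Fin.ext_iff]
  constructor
  · intro h0
    have hdvd : b ∣ i.val := Nat.dvd_of_mod_eq_zero h0
    set q := i.val / b with hqdef
    have hq : i.val = q * b := (Nat.div_mul_cancel hdvd).symm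
    by_cases hlt : i.val < m * b
    · -- first access
      have hempty : ¬ (prevAccesses a i).Nonempty := by
        rintro ⟨j, hj⟩
        simp only [prevAccesses, Finset.mem_filter, Finset.mem_univ, true_and] at hj
        obtain ⟨hji, hja⟩ := hj
        rw [haij] at hja
        have h1 : j.val / b < i.val / b := Nat.div_lt_div_of_lt_of_dvd hdvd hji
        have h2 : i.val / b < m := (Nat.div_lt_iff_lt_mul hb0).2 hlt
        rw [Nat.mod_eq_of_lt (lt_trans h1 h2), Nat.mod_eq_of_lt h2] at hja
        omega
      rw [RD, dif_neg hempty]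
    · -- repeated access
      have hqm : m ≤ q := by
        rw [hqdef]
        exact (Nat.le_div_iff_mul_le hb0).2 (not_lt.1 hlt)
      have hmul : (q - m + 1) * b = (q - m) * b + b := by ring
      have hj0lt : (q - m) * b + (b - 1) < i.val := by
        have := Nat.mul_le_mul_right b (show q - m + 1 ≤ q by omega)
        omega
      set j₀ : Fin (r * m * b) := ⟨(q - m) * b + (b - 1), lt_trans hj0lt i.isLt⟩ with hj₀
      have hj0val : j₀.val = (q - m) * b + (b - 1) := rfl
      have hj0div : j₀.val / b = q - m := by
        show ((q - m) * b + (b - 1)) / b = q - m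
        rw [add_comm, Nat.add_mul_div_right _ _ hb0, Nat.div_eq_of_lt (by omega)]
        omega
      have haj0 : a j₀ = a i := by
        rw [haij, hj0div, ← hqdef]
        conv_rhs => rw [show q = q - m + m by omega]
        rw [Nat.add_mod_right]
      have hmem : j₀ ∈ prevAccesses a i := by
        simp only [prevAccesses, Finset.mem_filter, Finset.mem_univ, true_and]
        exact ⟨by rw [Fin.lt_def]; exact hj0lt, haj0⟩
      have hne : (prevAccesses a i).Nonempty := ⟨j₀, hmem⟩
      rw [RD, dif_pos hne]
      have hmax : (prevAccesses a i).max' hne = j₀ := by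
        apply le_antisymm
        · apply Finset.max'_le
          intro k hk
          simp only [prevAccesses, Finset.mem_filter, Finset.mem_univ, true_and] at hk
          obtain ⟨hki, hka⟩ := hk
          by_contra hcon
          have hj0k : j₀.val < k.val := by
            rw [not_le, Fin.lt_def] at hcon; exact hcon
          set p := k.val / b with hpdef
          have hp1 : q - m + 1 ≤ p := by
            rw [hpdef]
            apply (Nat.le_div_iff_mul_le hb0).2
            omega
          have hp2 : p < q := by
            rw [hpdef]
            have hki' := Fin.lt_def.1 hki
            exact (Nat.div_lt_iff_lt_mul hb0).2 (by omega)
          rw [haij, ← hpdef, ← hqdef] at hka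
          have hdv : m ∣ q - p := (Nat.modEq_iff_dvd' (by omega)).1 hka
          have := Nat.le_of_dvd (by omega) hdv
          omega
        · exact Finset.le_max' _ _ hmem
      rw [hmax]
      have himg : (Finset.univ.filter (fun k : Fin (r * m * b) => j₀ < k ∧ k ≤ i)).image a
          = Finset.univ := by
        apply Finset.eq_univ_of_forall
        intro v
        rw [Finset.mem_image]
        set t := (q - v.val) % m with htdef
        have ht : t < m := Nat.mod_lt _ hm
        have hvq : v.val ≤ q := le_trans (le_of_lt v.isLt) hqm
        have hst : q - v.val = m * ((q - v.val) / m) + t := (Nat.div_add_mod _ _).symm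
        have hkle : (q - t) * b ≤ i.val := by
          rw [hq]; exact Nat.mul_le_mul_right b (by omega)
        refine ⟨⟨(q - t) * b, lt_of_le_of_lt hkle i.isLt⟩, ?_, ?_⟩
        · simp only [Finset.mem_filter, Finset.mem_univ, true_and]
          constructor
          · rw [Fin.lt_def]
            show j₀.val < (q - t) * b
            have : (q - m + 1) * b ≤ (q - t) * b :=
              Nat.mul_le_mul_right b (by omega)
            omega
          · rw [Fin.le_def]
            exact hkle
        · rw [ha]
          apply Fin.ext
          show ((q - t) * b / b) % m = v.val
          rw [Nat.mul_div_cancel _ hb0]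
          rw [show q - t = v.val + m * ((q - v.val) / m) by omega]
          rw [Nat.add_mul_mod_self_left, Nat.mod_eq_of_lt v.isLt]
      rw [himg, Finset.card_univ, Fintype.card_fin]
  · intro hne0
    have hipos : i.val ≠ 0 := by
      intro h; apply hne0; rw [h]; exact Nat.zero_mod b
    have hndvd : ¬ b ∣ i.val := by
      rw [Nat.dvd_iff_mod_eq_zero]; exact hne0
    obtain ⟨n, hn⟩ : ∃ n, i.val = n + 1 := ⟨i.val - 1, by omega⟩
    set j : Fin (r * m * b) := ⟨n, lt_trans (by omega) i.isLt⟩ with hj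
    have hjval : j.val = n := rfl
    have hdiv : j.val / b = i.val / b := by
      show n / b = i.val / b
      rw [hn, Nat.succ_div, if_neg (by rw [← hn]; exact hndvd)]
      omega
    have haj : a j = a i := by rw [haij, hdiv]
    have hmem : j ∈ prevAccesses a i := by
      simp only [prevAccesses, Finset.mem_filter, Finset.mem_univ, true_and]
      exact ⟨by rw [Fin.lt_def]; omega, haj⟩
    have hne : (prevAccesses a i).Nonempty := ⟨j, hmem⟩
    rw [RD, dif_pos hne]
    have hmax : (prevAccesses a i).max' hne = j := by
      apply le_antisymm
      · apply Finset.max'_le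
        intro k hk
        simp only [prevAccesses, Finset.mem_filter, Finset.mem_univ, true_and] at hk
        have := Fin.lt_def.1 hk.1
        rw [Fin.le_def]
        omega
      · exact Finset.le_max' _ _ hmem
    rw [hmax]
    have hfilt : (Finset.univ.filter (fun k : Fin (r * m * b) => j < k ∧ k ≤ i)) = {i} := by
      ext k
      simp only [Finset.mem_filter, Finset.mem_univ, true_and, Finset.mem_singleton,
        Fin.lt_def, Fin.le_def]
      constructor
      · intro hk; apply Fin.ext; omega
      · intro hk; subst hk; exact ⟨by omega, le_refl _⟩
    rw [hfilt, Finset.image_singleton, Finset.card_singleton]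
end

section
/- (Theorem 3) Let m ≥ 1 and n ≥ 1. Among all traces a : Fin (n·m) → Fin m in which each of the m addresses is accessed exactly n times, the minimum possible total reuse distance is exactly m·(m + n − 1): every such trace has total reuse distance at least m·(m + n − 1), and the grouped trace e₁^n e₂^n ... e_m^n (mini-batch size b = n) attains this value; hence mini-batching with a single mini-batch covering the whole stream provides optimal access locality for the ensemble implementation. -/
/-- The fully grouped trace `e₁^n e₂^n … e_m^n`: each learner processes the
entire stream of `n` instances as a single mini-batch. -/
def groupedTrace (n m : ℕ) (hn : 0 < n) : Fin (n * m) → Fin m :=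
  fun i => ⟨i.val / n, by
    have := i.isLt
    exact Nat.div_lt_of_lt_mul (by omega)⟩

lemma mem_prevAccesses {N m : ℕ} {a : Fin N → Fin m} {i j : Fin N} :
    j ∈ prevAccesses a i ↔ j < i ∧ a j = a i := by
  simp [prevAccesses]

lemma RD_first {N m : ℕ} {a : Fin N → Fin m} {i : Fin N}
    (h : ¬ (prevAccesses a i).Nonempty) : RD a i = m := by
  rw [RD, dif_neg h]

lemma RD_ge_one {N m : ℕ} (hm : 1 ≤ m) (a : Fin N → Fin m) (i : Fin N) :
    1 ≤ RD a i := by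
  rw [RD]
  split
  case isTrue h =>
    have hmax := mem_prevAccesses.mp (Finset.max'_mem _ h)
    have hi : i ∈ Finset.univ.filter
        (fun k : Fin N => (prevAccesses a i).max' h < k ∧ k ≤ i) := by
      simp only [Finset.mem_filter, Finset.mem_univ, true_and]
      exact ⟨hmax.1, le_refl i⟩
    have : (Finset.univ.filter
        (fun k : Fin N => (prevAccesses a i).max' h < k ∧ k ≤ i)).image a |>.Nonempty :=
      ⟨a i, Finset.mem_image_of_mem a hi⟩
    exact Finset.card_pos.mpr this
  case isFalse => exact hm

lemma card_firsts {N m n : ℕ} (hn : 1 ≤ n) (a : Fin N → Fin m)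
    (ha : ∀ e : Fin m, (Finset.univ.filter (fun i => a i = e)).card = n) :
    (Finset.univ.filter (fun i : Fin N => ¬ (prevAccesses a i).Nonempty)).card = m := by
  have key : (Finset.univ.filter (fun i : Fin N => ¬ (prevAccesses a i).Nonempty)).card
      = (Finset.univ : Finset (Fin m)).card := by
    apply Finset.card_bij (fun i _ => a i)
    · intro i _; exact Finset.mem_univ _
    · intro i hi j hj hij
      simp only [Finset.mem_filter, Finset.mem_univ, true_and] at hi hj
      rcases lt_trichotomy i j with h | h | h
      · exact absurd ⟨i, mem_prevAccesses.mpr ⟨h, hij⟩⟩ hj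
      · exact h
      · exact absurd ⟨j, mem_prevAccesses.mpr ⟨h, hij.symm⟩⟩ hi
    · intro e _
      have hS : (Finset.univ.filter (fun i => a i = e)).Nonempty := by
        rw [← Finset.card_pos, ha e]; omega
      set i0 := (Finset.univ.filter (fun i => a i = e)).min' hS with hi0
      have hmem := Finset.min'_mem _ hS
      simp only [Finset.mem_filter, Finset.mem_univ, true_and] at hmem
      refine ⟨i0, ?_, hmem⟩
      simp only [Finset.mem_filter, Finset.mem_univ, true_and]
      rintro ⟨j, hj⟩
      rw [mem_prevAccesses] at hj
      have : i0 ≤ j := Finset.min'_le _ _ (by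
        simp only [Finset.mem_filter, Finset.mem_univ, true_and]
        rw [hj.2, hmem])
      exact absurd hj.1 (not_lt.mpr this)
  simpa using key


lemma grouped_eq_iff {n m : ℕ} (hn : 0 < n) {i j : Fin (n * m)} :
    groupedTrace n m hn j = groupedTrace n m hn i ↔ j.val / n = i.val / n := by
  simp [groupedTrace, Fin.ext_iff]

lemma RD_grouped {n m : ℕ} (hn : 0 < n) (i : Fin (n * m)) :
    RD (groupedTrace n m hn) i = if i.val % n = 0 then m else 1 := by
  set a := groupedTrace n m hn with ha
  by_cases hr : i.val % n = 0
  · rw [if_pos hr]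
    apply RD_first
    rintro ⟨j, hj⟩
    rw [mem_prevAccesses, grouped_eq_iff] at hj
    have h1 : n * (j.val / n) ≤ j.val := Nat.mul_div_le _ _
    have h2 : n * (i.val / n) = i.val := Nat.mul_div_cancel' (Nat.dvd_of_mod_eq_zero hr)
    have := Fin.lt_def.mp hj.1
    rw [hj.2, h2] at h1
    omega
  · rw [if_neg hr]
    have hipos : 0 < i.val := by
      rcases Nat.eq_zero_or_pos i.val with h | h
      · exact absurd (h ▸ (Nat.zero_mod n)) hr
      · exact h
    have hdiv : (i.val - 1) / n = i.val / n := by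
      have hmod := Nat.mod_lt i.val hn
      have hdm := Nat.div_add_mod i.val n
      have h1 : i.val - 1 = n * (i.val / n) + (i.val % n - 1) := by omega
      rw [h1, Nat.mul_add_div hn, Nat.div_eq_of_lt (by omega : i.val % n - 1 < n)]
      omega
    have hlt : i.val - 1 < n * m := Nat.lt_of_le_of_lt (Nat.sub_le _ _) i.isLt
    have hprev : (⟨i.val - 1, hlt⟩ : Fin (n * m)) ∈ prevAccesses a i := by
      rw [mem_prevAccesses, grouped_eq_iff]
      refine ⟨Fin.lt_def.mpr ?_, hdiv⟩
      show i.val - 1 < i.val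
      omega
    have hne : (prevAccesses a i).Nonempty := ⟨_, hprev⟩
    rw [RD, dif_pos hne]
    have hmax : (prevAccesses a i).max' hne = ⟨i.val - 1, hlt⟩ := by
      apply le_antisymm
      · apply Finset.max'_le
        intro j hj
        have hji := Fin.lt_def.mp (mem_prevAccesses.mp hj).1
        apply Fin.le_def.mpr
        show j.val ≤ i.val - 1
        omega
      · exact Finset.le_max' _ _ hprev
    rw [hmax]
    have hset : Finset.univ.filter
        (fun k : Fin (n * m) => (⟨i.val - 1, hlt⟩ : Fin (n * m)) < k ∧ k ≤ i) = {i} := by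
      ext k
      simp only [Finset.mem_filter, Finset.mem_univ, true_and, Finset.mem_singleton,
        Fin.lt_def, Fin.le_def, Fin.ext_iff]
      omega
    rw [hset, Finset.image_singleton, Finset.card_singleton]

lemma card_multiples {n m : ℕ} (hn : 0 < n) :
    (Finset.univ.filter (fun i : Fin (n * m) => i.val % n = 0)).card = m := by
  have key : (Finset.univ.filter (fun i : Fin (n * m) => i.val % n = 0)).card
      = (Finset.univ : Finset (Fin m)).card := by
    have hj : ∀ e : Fin m, n * e.val < n * m := fun e =>
      (mul_lt_mul_iff_right₀ hn).mpr e.isLt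
    refine Finset.card_bij' (fun i _ => groupedTrace n m hn i)
      (fun e _ => (⟨n * e.val, hj e⟩ : Fin (n * m))) ?_ ?_ ?_ ?_
    · intro i _; exact Finset.mem_univ _
    · intro e _
      simp only [Finset.mem_filter, Finset.mem_univ, true_and]
      exact Nat.mul_mod_right n e.val
    · intro i hi
      simp only [Finset.mem_filter, Finset.mem_univ, true_and] at hi
      apply Fin.ext
      show n * (i.val / n) = i.val
      exact Nat.mul_div_cancel' (Nat.dvd_of_mod_eq_zero hi)
    · intro e _
      apply Fin.ext
      show (n * e.val) / n = e.val
      exact Nat.mul_div_cancel_left _ hn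
  simpa using key

/-- Theorem 3: among all traces where each of the `m` addresses is accessed
exactly `n` times, the minimum possible total reuse distance is exactly
`m·(m + n − 1)`, and it is attained by the grouped trace (a single mini-batch
covering the whole stream): mini-batching provides optimal access locality. -/
theorem groupedTrace_optimal {n m : ℕ} (hn : 1 ≤ n) (hm : 1 ≤ m) :
    (∀ a : Fin (n * m) → Fin m,
        (∀ e : Fin m, (Finset.univ.filter (fun i => a i = e)).card = n) →
        m * (m + n - 1) ≤ totalRD a) ∧
    totalRD (groupedTrace n m hn) = m * (m + n - 1) := by
  constructor
  · intro a ha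
    obtain ⟨k, rfl⟩ : ∃ k, n = k + 1 := ⟨n - 1, by omega⟩
    have hcard := card_firsts hn a ha
    set P := fun i : Fin ((k+1) * m) => ¬ (prevAccesses a i).Nonempty with hP
    have hsplit : totalRD a = ∑ i ∈ Finset.univ.filter P, RD a i
        + ∑ i ∈ Finset.univ.filter (fun i => ¬ P i), RD a i := by
      rw [totalRD, Finset.sum_filter_add_sum_filter_not]
    have h1 : ∑ i ∈ Finset.univ.filter P, RD a i = m * m := by
      rw [Finset.sum_congr rfl (fun i hi => RD_first (Finset.mem_filter.mp hi).2),
        Finset.sum_const, hcard, smul_eq_mul]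
    have h2 : (Finset.univ.filter (fun i => ¬ P i)).card = k * m := by
      have := Finset.card_filter_add_card_filter_not (s := Finset.univ) (p := P)
      rw [hcard, Finset.card_univ, Fintype.card_fin] at this
      have hx : (k + 1) * m = k * m + m := by ring
      omega
    have h3 : (Finset.univ.filter (fun i => ¬ P i)).card
        ≤ ∑ i ∈ Finset.univ.filter (fun i => ¬ P i), RD a i := by
      rw [Finset.card_eq_sum_ones]
      exact Finset.sum_le_sum fun i _ => RD_ge_one hm a i
    have hgoal : m * (m + (k + 1) - 1) = m * m + k * m := by
      have : m + (k + 1) - 1 = m + k := by omega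
      rw [this, Nat.mul_add, Nat.mul_comm m k]
    omega
  · obtain ⟨k, rfl⟩ : ∃ k, n = k + 1 := ⟨n - 1, by omega⟩
    have h0 : totalRD (groupedTrace (k+1) m hn)
        = ∑ i : Fin ((k+1) * m), (if i.val % (k+1) = 0 then m else 1) := by
      rw [totalRD]
      exact Finset.sum_congr rfl fun i _ => RD_grouped hn i
    rw [h0, Finset.sum_ite, Finset.sum_const, Finset.sum_const, smul_eq_mul, smul_eq_mul,
      card_multiples hn]
    have h2 : (Finset.univ.filter (fun i : Fin ((k+1) * m) => ¬ i.val % (k+1) = 0)).card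
        = k * m := by
      have := Finset.card_filter_add_card_filter_not (s := Finset.univ)
        (p := fun i : Fin ((k+1) * m) => i.val % (k+1) = 0)
      rw [card_multiples hn, Finset.card_univ, Fintype.card_fin] at this
      have hx : (k + 1) * m = k * m + m := by ring
      omega
    rw [h2]
    have : m + (k + 1) - 1 = m + k := by omega
    rw [this, Nat.mul_add, Nat.mul_comm m k]
    omega
end
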